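/- The number of digitally convex sets of the cycle C_n satisfies n_D(C_3) = 2, n_D(C_4) = 6, n_D(C_5) = 12, n_D(C_6) = 20, and for every integer n ≥ 7, n_D(C_n) = 2·n_D(C_{n−1}) − n_D(C_{n−2}) + n_D(C_{n−4}). -/

import Mathlib

open SimpleGraph

/-- `N[S]`: the union of closed neighbourhoods of the vertices of `S`. -/
def closedNbhd {V : Type*} (G : SimpleGraph V) (S : Set V) : Set V :=
  ⋃ v ∈ S, insert v (G.neighborSet v)

/-- A set `S` is digitally convex in `G` if every vertex `v` with `N[v] ⊆ N[S]`
belongs to `S`. -/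
def DigConvex {V : Type*} (G : SimpleGraph V) (S : Set V) : Prop :=
  ∀ v : V, insert v (G.neighborSet v) ⊆ closedNbhd G S → v ∈ S

/-- `n_D(G)`: the number of digitally convex sets of `G`. -/
noncomputable def nD {V : Type*} (G : SimpleGraph V) : ℕ :=
  Nat.card {S : Set V // DigConvex G S}

/-- The cycle graph `C_n` on `ZMod n`: `i` adjacent to `j` iff `j - i = ±1`. -/
def cycleG (n : ℕ) : SimpleGraph (ZMod n) :=
  SimpleGraph.fromRel (fun i j => j = i + 1)

/-!
A set `S ⊆ ℤ/n` is digitally convex in `C_n` exactly when, read as a cyclic binary word, it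
contains neither `101` nor `1001`. Recording at each position the window of three consecutive
letters turns such words into closed walks of length `n` in a digraph on the 8 windows, so
`n_D(C_n) = tr Aⁿ` for its adjacency matrix `A`. The recurrence follows by taking traces in
`Aᵏ (A⁶ + A⁴) = Aᵏ (2 A⁵ + A²)`, an identity between explicit 8 × 8 matrices.
-/

namespace Matrix

variable {α R : Type*} [Fintype α] [DecidableEq α] [CommSemiring R]

theorem pow_apply_eq_sum_paths (M : Matrix α α R) (k : ℕ) (a b : α) :
    (M ^ k) a b = ∑ p : Fin (k + 1) → α,
      if p 0 = a ∧ p (Fin.last k) = b then ∏ i : Fin k, M (p i.castSucc) (p i.succ) else 0 := by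
  induction k generalizing b with
  | zero =>
    rw [← (Equiv.funUnique (Fin 1) α).symm.sum_comp]
    simp [ite_and, one_apply]
  | succ k ih =>
    rw [pow_succ, mul_apply, ← (Fin.snocEquiv fun _ => α).sum_comp, Fintype.sum_prod_type_right]
    simp_rw [ih, Finset.sum_mul]
    rw [Finset.sum_comm]
    refine Finset.sum_congr rfl fun p _ => ?_
    simp [Fin.prod_univ_castSucc, ite_and, Fin.snoc_castSucc, ← Fin.castSucc_succ]

theorem trace_pow_succ_eq_sum (M : Matrix α α R) (m : ℕ) :
    (M ^ (m + 1)).trace = ∑ w : Fin (m + 1) → α, ∏ i, M (w i) (w (i + 1)) := by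
  simp_rw [trace, diag, pow_succ, mul_apply, pow_apply_eq_sum_paths, Finset.sum_mul]
  rw [Finset.sum_comm]
  simp_rw [Finset.sum_comm (s := (Finset.univ : Finset α))
    (t := (Finset.univ : Finset (Fin (m + 1) → α)))]
  refine Finset.sum_congr rfl fun p _ => ?_
  simp [ite_and, Fin.prod_univ_castSucc, Fin.coeSucc_eq_succ]

end Matrix

def transferMatrix {α : Type*} (R : α → α → Prop) [DecidableRel R] : Matrix α α ℕ :=
  Matrix.of fun a b => if R a b then 1 else 0

theorem card_cycles_eq_trace_transferMatrix_pow {α : Type*} [Fintype α] [DecidableEq α]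
    (R : α → α → Prop) [DecidableRel R] (m : ℕ) :
    Nat.card {w : Fin (m + 1) → α // ∀ i, R (w i) (w (i + 1))} =
      (transferMatrix R ^ (m + 1)).trace := by
  rw [Matrix.trace_pow_succ_eq_sum]
  simp only [transferMatrix, Matrix.of_apply, Fintype.prod_boole]
  rw [Nat.card_eq_fintype_card, Fintype.card_subtype, Finset.card_filter]
  congr!

open Classical in
noncomputable def setEquivBoolFun (α : Type*) : Set α ≃ (α → Bool) where
  toFun S a := decide (a ∈ S)
  invFun f := {a | f a}
  left_inv S := by ext; simp
  right_inv f := by ext; simp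

section Windows

variable {ι β : Type*}

/-- Consecutive windows `(f i, f (σ i), f (σ (σ i)))` overlap in two letters and together span
the four letters constrained by `C`. -/
def windowShift (C : β → β → β → β → Prop) (p q : β × β × β) : Prop :=
  q.1 = p.2.1 ∧ q.2.1 = p.2.2 ∧ C p.1 p.2.1 p.2.2 q.2.2

instance [DecidableEq β] (C : β → β → β → β → Prop)
    [∀ a b c d, Decidable (C a b c d)] : DecidableRel (windowShift C) :=
  fun _ _ => inferInstanceAs (Decidable (_ ∧ _ ∧ _))

def windowEquiv (σ : ι → ι) (C : β → β → β → β → Prop) :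
    {f : ι → β // ∀ i, C (f i) (f (σ i)) (f (σ (σ i))) (f (σ (σ (σ i))))} ≃
      {w : ι → β × β × β // ∀ i, windowShift C (w i) (w (σ i))} where
  toFun f := ⟨fun i => (f.1 i, f.1 (σ i), f.1 (σ (σ i))), fun i => ⟨rfl, rfl, f.2 i⟩⟩
  invFun w := ⟨fun i => (w.1 i).1, fun i => by
    dsimp only
    obtain ⟨h₁, h₂, hC⟩ := w.2 i
    rwa [(w.2 (σ (σ i))).1, (w.2 (σ i)).1, (w.2 (σ i)).2.1, h₁, h₂]⟩
  left_inv _ := rfl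
  right_inv w := by
    ext i : 2
    simp only [(w.2 _).1, (w.2 _).2.1]

end Windows

theorem insert_neighborSet_cycleG {n : ℕ} (v : ZMod n) :
    insert v ((cycleG n).neighborSet v) = {v - 1, v, v + 1} := by
  ext u
  simp only [cycleG, Set.mem_insert_iff, mem_neighborSet, fromRel_adj, Set.mem_singleton_iff,
    eq_sub_iff_add_eq]
  grind

theorem mem_closedNbhd_cycleG {n : ℕ} (S : Set (ZMod n)) (u : ZMod n) :
    u ∈ closedNbhd (cycleG n) S ↔ u - 1 ∈ S ∨ u ∈ S ∨ u + 1 ∈ S := by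
  simp only [closedNbhd, insert_neighborSet_cycleG, Set.mem_iUnion, Set.mem_insert_iff,
    Set.mem_singleton_iff, exists_prop]
  grind

theorem digConvex_cycleG_iff {n : ℕ} (S : Set (ZMod n)) :
    DigConvex (cycleG n) S ↔ ∀ i, i ∈ S → i + 1 ∉ S → i + 2 ∉ S ∧ i + 3 ∉ S := by
  simp only [DigConvex, insert_neighborSet_cycleG, Set.insert_subset_iff,
    Set.singleton_subset_iff, mem_closedNbhd_cycleG]
  constructor
  · intro h i
    specialize h (i + 1)
    ring_nf at *
    tauto
  · intro h v
    have h₁ := h (v - 1)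
    have h₂ := h (v - 2)
    clear h
    ring_nf at *
    tauto

def NoShortGap (a b c d : Bool) : Prop := a → ¬b → ¬c ∧ ¬d

instance (a b c d : Bool) : Decidable (NoShortGap a b c d) :=
  inferInstanceAs (Decidable (_ → _))

def convexTransfer : Matrix (Bool × Bool × Bool) (Bool × Bool × Bool) ℕ :=
  transferMatrix (windowShift NoShortGap)

theorem nD_cycleG_eq_trace {n : ℕ} (hn : n ≠ 0) :
    nD (cycleG n) = (convexTransfer ^ n).trace := by
  obtain ⟨m, rfl⟩ : ∃ m, n = m + 1 := ⟨n - 1, by omega⟩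
  have hS (S : Set (ZMod (m + 1))) : DigConvex (cycleG (m + 1)) S ↔
      ∀ i, NoShortGap (setEquivBoolFun _ S i) (setEquivBoolFun _ S (i + 1))
        (setEquivBoolFun _ S (i + 1 + 1)) (setEquivBoolFun _ S (i + 1 + 1 + 1)) := by
    simp only [digConvex_cycleG_iff, setEquivBoolFun, NoShortGap, Equiv.coe_fn_mk,
      decide_eq_true_eq]
    ring_nf
  rw [nD, Nat.card_congr
    (((setEquivBoolFun _).subtypeEquiv hS).trans (windowEquiv (· + 1) NoShortGap))]
  exact card_cycles_eq_trace_transferMatrix_pow _ m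

/-- `x² (x⁴ - 2x³ + x² - 1)` annihilates the transfer matrix; the quartic is the characteristic
polynomial of the recurrence. -/
theorem convexTransfer_pow_six_add_pow_four :
    convexTransfer ^ 6 + convexTransfer ^ 4 = 2 * convexTransfer ^ 5 + convexTransfer ^ 2 := by
  decide +kernel

theorem trace_convexTransfer_pow_three_to_six :
    (convexTransfer ^ 3).trace = 2 ∧ (convexTransfer ^ 4).trace = 6 ∧
      (convexTransfer ^ 5).trace = 12 ∧ (convexTransfer ^ 6).trace = 20 := by
  decide +kernel

theorem trace_convexTransfer_pow_add_six (k : ℕ) :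
    (convexTransfer ^ (k + 6)).trace + (convexTransfer ^ (k + 4)).trace =
      2 * (convexTransfer ^ (k + 5)).trace + (convexTransfer ^ (k + 2)).trace := by
  have h := congrArg (fun B => (convexTransfer ^ k * B).trace) convexTransfer_pow_six_add_pow_four
  simpa [two_mul, mul_add, ← pow_add, Matrix.trace_add] using h

theorem nD_cycleG_add_seven (k : ℕ) :
    nD (cycleG (k + 7)) + nD (cycleG (k + 5)) = 2 * nD (cycleG (k + 6)) + nD (cycleG (k + 3)) := by
  rw [nD_cycleG_eq_trace (by omega : k + 7 ≠ 0), nD_cycleG_eq_trace (by omega : k + 5 ≠ 0),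
    nD_cycleG_eq_trace (by omega : k + 6 ≠ 0), nD_cycleG_eq_trace (by omega : k + 3 ≠ 0)]
  exact trace_convexTransfer_pow_add_six (k + 1)

theorem nD_cycle_recurrence :
    nD (cycleG 3) = 2 ∧ nD (cycleG 4) = 6 ∧ nD (cycleG 5) = 12 ∧ nD (cycleG 6) = 20 ∧
      ∀ n : ℕ, 7 ≤ n →
        (nD (cycleG n) : ℤ) =
          2 * nD (cycleG (n - 1)) - nD (cycleG (n - 2)) + nD (cycleG (n - 4)) := by
  obtain ⟨h₃, h₄, h₅, h₆⟩ := trace_convexTransfer_pow_three_to_six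
  refine ⟨(nD_cycleG_eq_trace (by norm_num)).trans h₃,
    (nD_cycleG_eq_trace (by norm_num)).trans h₄, (nD_cycleG_eq_trace (by norm_num)).trans h₅,
    (nD_cycleG_eq_trace (by norm_num)).trans h₆, fun n hn => ?_⟩
  obtain ⟨k, rfl⟩ : ∃ k, n = k + 7 := ⟨n - 7, by omega⟩
  have h := nD_cycleG_add_seven k
  rw [show k + 7 - 1 = k + 6 by omega, show k + 7 - 2 = k + 5 by omega,
    show k + 7 - 4 = k + 3 by omega]
  omega
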